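/- arXiv:1612.06069 — 3 statements merged into one kernel-verified Lean document; each statement's English description precedes it below -/
import Mathlib

section
/- Morton decoding inverts Morton encoding: given z = 2*dilate(i) + dilate(j), masking z with the bit pattern having 1s at all odd positions and right-shifting by 1 yields dilate(i), and masking z with the pattern having 1s at all even positions yields dilate(j); un-dilating then recovers i and j. -/
/-- Dilation: insert a zero bit between every two consecutive bits. -/
def dilate (k : ℕ) : ℕ := ∑ t ∈ Finset.range (k + 1), (k.testBit t).toNat * 4 ^ t

/-- Un-dilation: collect the bits at even positions. -/
def undilate (z : ℕ) : ℕ := ∑ t ∈ Finset.range (z + 1), (z.testBit (2 * t)).toNat * 2 ^ t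

/-!
Every number in sight is a sum of distinct powers of two `∑ n ∈ s, 2 ^ n`, whose bit `n` is set
exactly when `n ∈ s`. Bit `2 t` of `dilate k` is bit `t` of `k` and its odd bits vanish, so the
Morton code `2 * dilate i + dilate j` carries the bits of `j` at even and those of `i` at odd
positions. Masking and shifting act position by position, and `i, j < 2 ^ m` makes the masks wide
enough to keep every set bit; `undilate` reads the even bits back.
-/

open Finset Function

namespace Nat

theorem testBit_sum_two_pow (s : Finset ℕ) (n : ℕ) :
    (∑ i ∈ s, 2 ^ i).testBit n = decide (n ∈ s) := by
  have h := congrArg (n ∈ ·) (toFinset_bitIndices_sum_two_pow s)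
  simp only [List.mem_toFinset, mem_bitIndices, eq_iff_iff] at h
  rwa [Bool.eq_iff_iff, decide_eq_true_iff]

theorem testBit_sum_two_pow_comp {e : ℕ → ℕ} (he : Injective e) (s : Finset ℕ) (n : ℕ) :
    (∑ t ∈ s, 2 ^ e t).testBit n = decide (n ∈ s.image e) := by
  rw [← sum_image he.injOn, testBit_sum_two_pow]

theorem lt_of_testBit_eq_true {k t : ℕ} (h : k.testBit t) : t < k :=
  lt_of_lt_of_le Nat.lt_two_pow_self (ge_two_pow_of_testBit h)

theorem lt_of_testBit_of_lt_two_pow {k t m : ℕ} (hk : k < 2 ^ m) (h : k.testBit t) : t < m :=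
  (Nat.pow_lt_pow_iff_right (by norm_num)).1 (lt_of_le_of_lt (ge_two_pow_of_testBit h) hk)

theorem sum_range_toNat_testBit_mul {k N : ℕ} (hN : k < N) (f : ℕ → ℕ) :
    ∑ t ∈ range N, (k.testBit t).toNat * f t = ∑ t ∈ k.bitIndices.toFinset, f t := by
  have hbits : k.bitIndices.toFinset = (range N).filter (k.testBit ·) := by
    ext t
    simp only [List.mem_toFinset, mem_bitIndices, mem_filter, mem_range, iff_and_self]
    exact fun h => (lt_of_testBit_eq_true h).trans hN
  rw [hbits, sum_filter]
  exact sum_congr rfl fun t _ => by cases k.testBit t <;> simp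

end Nat

open Nat

theorem dilate_eq_sum_two_pow (k : ℕ) : dilate k = ∑ t ∈ k.bitIndices.toFinset, 2 ^ (2 * t) := by
  simp only [dilate, sum_range_toNat_testBit_mul (lt_add_one k), pow_mul]
  norm_num

theorem testBit_dilate_two_mul (k t : ℕ) : (dilate k).testBit (2 * t) = k.testBit t := by
  rw [dilate_eq_sum_two_pow, testBit_sum_two_pow_comp (mul_right_injective₀ two_ne_zero)]
  simp

theorem testBit_dilate_two_mul_add_one (k t : ℕ) : (dilate k).testBit (2 * t + 1) = false := by
  rw [dilate_eq_sum_two_pow, testBit_sum_two_pow_comp (mul_right_injective₀ two_ne_zero)]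
  simp only [mem_image, decide_eq_false_iff_not, not_exists, not_and]
  omega

theorem le_dilate (k : ℕ) : k ≤ dilate k := by
  conv_lhs => rw [← sum_toFinset_bitIndices_two_pow k]
  rw [dilate_eq_sum_two_pow]
  exact sum_le_sum fun t _ => Nat.pow_le_pow_right two_pos (by omega)

theorem undilate_dilate (k : ℕ) : undilate (dilate k) = k := by
  simp only [undilate, testBit_dilate_two_mul]
  rw [sum_range_toNat_testBit_mul (Nat.lt_add_one_of_le (le_dilate k)),
    sum_toFinset_bitIndices_two_pow]

def mortonEncode (i j : ℕ) : ℕ := 2 * dilate i + dilate j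

def evenMask (m : ℕ) : ℕ := ∑ t ∈ range m, 2 ^ (2 * t)

def oddMask (m : ℕ) : ℕ := ∑ t ∈ range m, 2 ^ (2 * t + 1)

theorem mortonEncode_eq_sum_two_pow (i j : ℕ) :
    mortonEncode i j = ∑ n ∈ i.bitIndices.toFinset.image (2 * · + 1) ∪
      j.bitIndices.toFinset.image (2 * ·), 2 ^ n := by
  rw [sum_union, sum_image, sum_image, mortonEncode, dilate_eq_sum_two_pow, dilate_eq_sum_two_pow,
    mul_sum]
  · simp only [pow_succ, mul_comm]
  · exact (mul_right_injective₀ two_ne_zero).injOn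
  · exact fun a _ b _ h => by simpa using h
  · simp only [disjoint_left, mem_image]
    omega

theorem testBit_mortonEncode_two_mul (i j t : ℕ) :
    (mortonEncode i j).testBit (2 * t) = j.testBit t := by
  rw [mortonEncode_eq_sum_two_pow, testBit_sum_two_pow, Bool.eq_iff_iff, decide_eq_true_iff]
  simp only [mem_union, mem_image, List.mem_toFinset, mem_bitIndices]
  grind

theorem testBit_mortonEncode_two_mul_add_one (i j t : ℕ) :
    (mortonEncode i j).testBit (2 * t + 1) = i.testBit t := by
  rw [mortonEncode_eq_sum_two_pow, testBit_sum_two_pow, Bool.eq_iff_iff, decide_eq_true_iff]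
  simp only [mem_union, mem_image, List.mem_toFinset, mem_bitIndices]
  grind

theorem testBit_evenMask_two_mul (m t : ℕ) : (evenMask m).testBit (2 * t) = decide (t < m) := by
  rw [evenMask, testBit_sum_two_pow_comp (mul_right_injective₀ two_ne_zero)]
  simp

theorem testBit_evenMask_two_mul_add_one (m t : ℕ) : (evenMask m).testBit (2 * t + 1) = false := by
  rw [evenMask, testBit_sum_two_pow_comp (mul_right_injective₀ two_ne_zero)]
  simp only [mem_image, decide_eq_false_iff_not, not_exists, not_and]
  omega

theorem testBit_oddMask_two_mul (m t : ℕ) : (oddMask m).testBit (2 * t) = false := by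
  rw [oddMask, testBit_sum_two_pow_comp (fun a b h => by simpa using h)]
  simp only [mem_image, decide_eq_false_iff_not, not_exists, not_and]
  omega

theorem testBit_oddMask_two_mul_add_one (m t : ℕ) :
    (oddMask m).testBit (2 * t + 1) = decide (t < m) := by
  rw [oddMask, testBit_sum_two_pow_comp (fun a b h => by simpa using h)]
  simp

theorem mortonEncode_and_evenMask {i j m : ℕ} (hj : j < 2 ^ m) :
    mortonEncode i j &&& evenMask m = dilate j := by
  refine eq_of_testBit_eq fun n => ?_
  obtain ⟨t, rfl | rfl⟩ := n.even_or_odd'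
  · rw [testBit_and, testBit_mortonEncode_two_mul, testBit_evenMask_two_mul,
      testBit_dilate_two_mul]
    cases h : j.testBit t
    · rfl
    · simp [lt_of_testBit_of_lt_two_pow hj h]
  · rw [testBit_and, testBit_evenMask_two_mul_add_one, testBit_dilate_two_mul_add_one,
      Bool.and_false]

theorem mortonEncode_and_oddMask_shiftRight_one {i j m : ℕ} (hi : i < 2 ^ m) :
    (mortonEncode i j &&& oddMask m) >>> 1 = dilate i := by
  refine eq_of_testBit_eq fun n => ?_
  rw [testBit_shiftRight, testBit_and, Nat.add_comm 1 n]
  obtain ⟨t, rfl | rfl⟩ := n.even_or_odd'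
  · rw [testBit_mortonEncode_two_mul_add_one, testBit_oddMask_two_mul_add_one,
      testBit_dilate_two_mul]
    cases h : i.testBit t
    · rfl
    · simp [lt_of_testBit_of_lt_two_pow hi h]
  · rw [show 2 * t + 1 + 1 = 2 * (t + 1) by ring, testBit_oddMask_two_mul,
      testBit_dilate_two_mul_add_one, Bool.and_false]

theorem morton_decode (m i j z : ℕ) (hi : i < 2 ^ m) (hj : j < 2 ^ m)
    (hz : z = 2 * dilate i + dilate j) :
    (z &&& ∑ t ∈ Finset.range m, 2 ^ (2 * t + 1)) >>> 1 = dilate i ∧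
      z &&& (∑ t ∈ Finset.range m, 2 ^ (2 * t)) = dilate j ∧
      undilate ((z &&& ∑ t ∈ Finset.range m, 2 ^ (2 * t + 1)) >>> 1) = i ∧
      undilate (z &&& ∑ t ∈ Finset.range m, 2 ^ (2 * t)) = j := by
  obtain rfl : z = mortonEncode i j := hz
  have hodd : (mortonEncode i j &&& oddMask m) >>> 1 = dilate i :=
    mortonEncode_and_oddMask_shiftRight_one hi
  have heven : mortonEncode i j &&& evenMask m = dilate j := mortonEncode_and_evenMask hj
  exact ⟨hodd, heven, (congrArg undilate hodd).trans (undilate_dilate i),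
    (congrArg undilate heven).trans (undilate_dilate j)⟩
end

section
/- The Morton-hybrid encoding map (i,j) ↦ M(i / 2^β, j / 2^β) * 4^β + (i % 2^β) * 2^β + (j % 2^β), where M is the Morton encoding, is a bijection from pairs (i,j) with i, j < 2^m onto {0,...,4^m - 1}, for any β ≤ m. -/
open Set

lemma dilate_eq_sum_range {k n : ℕ} (hk : k < 2 ^ n) :
    dilate k = ∑ t ∈ Finset.range n, (k.testBit t).toNat * 4 ^ t := by
  have vanish : ∀ N, k < 2 ^ N → ∀ t ≥ N, (k.testBit t).toNat * 4 ^ t = 0 := by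
    intro N hN t ht
    rw [Nat.testBit_eq_false_of_lt (hN.trans_le (Nat.pow_le_pow_right two_pos ht))]
    simp
  have hk' : k < 2 ^ (k + 1) := Nat.lt_two_pow_self.trans (Nat.pow_lt_pow_succ one_lt_two)
  rw [dilate, ← Finset.eventually_constant_sum (vanish _ hk') (Nat.le_add_left (k + 1) n),
    Finset.eventually_constant_sum (vanish _ hk) (Nat.le_add_right n (k + 1))]

lemma dilate_eq_mod_two_add (k : ℕ) : dilate k = k % 2 + 4 * dilate (k / 2) := by
  have bit_zero : (k.testBit 0).toNat = k % 2 := by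
    rcases Nat.mod_two_eq_zero_or_one k with h | h <;> simp [Nat.testBit_zero, h]
  rw [dilate_eq_sum_range (Nat.lt_two_pow_self.trans (Nat.pow_lt_pow_succ one_lt_two)),
    dilate_eq_sum_range ((Nat.div_le_self k 2).trans_lt Nat.lt_two_pow_self),
    Finset.sum_range_succ', Finset.mul_sum]
  simp only [Nat.testBit_div_two, bit_zero, pow_zero, mul_one]
  ring_nf

def morton (a b : ℕ) : ℕ := 2 * dilate a + dilate b

/-- The layout that orders the `T × T` blocks of the plane by `f` and stores each block row-major. -/
def hybridize (f : ℕ × ℕ → ℕ) (T : ℕ) (p : ℕ × ℕ) : ℕ :=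
  f (p.1 / T, p.2 / T) * (T * T) + (p.1 % T * T + p.2 % T)

lemma morton_eq_hybridize (a b : ℕ) :
    morton a b = hybridize (Function.uncurry morton) 2 (a, b) := by
  simp only [hybridize, morton, Function.uncurry_apply_pair]
  rw [dilate_eq_mod_two_add a, dilate_eq_mod_two_add b]
  ring

namespace Nat

lemma invOn_divMod_mulAdd (N K : ℕ) :
    InvOn (fun n => (n / K, n % K)) (fun p : ℕ × ℕ => p.1 * K + p.2)
      (Iio N ×ˢ Iio K) (Iio (N * K)) :=
  ⟨fun p ⟨_, hr⟩ =>
    Prod.ext_iff.2 <| (Nat.div_mod_unique (p.2.zero_le.trans_lt hr)).2 ⟨by ring, hr⟩,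
    fun n _ => div_add_mod' n K⟩

lemma bijOn_mulAdd (N K : ℕ) :
    BijOn (fun p : ℕ × ℕ => p.1 * K + p.2) (Iio N ×ˢ Iio K) (Iio (N * K)) := by
  refine (invOn_divMod_mulAdd N K).bijOn ?_ ?_
  · rintro ⟨q, r⟩ ⟨hq, hr⟩
    simp only [mem_Iio] at *
    nlinarith
  · intro n hn
    have hK : 0 < K := Nat.pos_of_ne_zero fun h => by simp [h] at hn
    exact ⟨Nat.div_lt_of_lt_mul (by simpa [mul_comm] using hn), Nat.mod_lt n hK⟩

lemma bijOn_divMod (N K : ℕ) :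
    BijOn (fun n => (n / K, n % K)) (Iio (N * K)) (Iio N ×ˢ Iio K) :=
  (bijOn_mulAdd N K).symm (invOn_divMod_mulAdd N K).symm

end Nat

lemma Set.bijOn_prodProdProdComm {α β γ δ : Type*} (s : Set α) (t : Set β) (u : Set γ)
    (v : Set δ) :
    BijOn (Equiv.prodProdProdComm α β γ δ) ((s ×ˢ t) ×ˢ (u ×ˢ v)) ((s ×ˢ u) ×ˢ (t ×ˢ v)) :=
  (Equiv.prodProdProdComm α β γ δ).bijOn fun _ => and_and_and_comm

theorem Set.BijOn.hybridize {f : ℕ × ℕ → ℕ} {N : ℕ}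
    (hf : BijOn f (Iio N ×ˢ Iio N) (Iio (N * N))) (T : ℕ) :
    BijOn (hybridize f T) (Iio (N * T) ×ˢ Iio (N * T)) (Iio (N * N * (T * T))) :=
  (Nat.bijOn_mulAdd _ _).comp <| (hf.prodMap (Nat.bijOn_mulAdd T T)).comp <|
    (bijOn_prodProdProdComm _ _ _ _).comp <|
      (Nat.bijOn_divMod N T).prodMap (Nat.bijOn_divMod N T)

lemma four_pow_eq_two_pow_mul_two_pow (n : ℕ) : 4 ^ n = 2 ^ n * 2 ^ n := by
  rw [← mul_pow]; norm_num

theorem morton_bijOn (n : ℕ) :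
    BijOn (Function.uncurry morton) (Iio (2 ^ n) ×ˢ Iio (2 ^ n)) (Iio (4 ^ n)) := by
  induction n with
  | zero => simp [morton, dilate]
  | succ n ih =>
    rw [four_pow_eq_two_pow_mul_two_pow] at ih ⊢
    have hybridize_morton : hybridize (Function.uncurry morton) 2 = Function.uncurry morton :=
      funext fun p => (morton_eq_hybridize p.1 p.2).symm
    simpa only [hybridize_morton, pow_succ, mul_mul_mul_comm] using ih.hybridize 2

theorem morton_hybrid_bijOn (m β : ℕ) (hβ : β ≤ m) :
    Set.BijOn
      (fun p : ℕ × ℕ =>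
        (2 * dilate (p.1 / 2 ^ β) + dilate (p.2 / 2 ^ β)) * 4 ^ β +
          (p.1 % 2 ^ β) * 2 ^ β + p.2 % 2 ^ β)
      {p : ℕ × ℕ | p.1 < 2 ^ m ∧ p.2 < 2 ^ m} (Set.Iio (4 ^ m)) := by
  obtain ⟨n, rfl⟩ := Nat.exists_eq_add_of_le' hβ
  have h := (four_pow_eq_two_pow_mul_two_pow n ▸ morton_bijOn n).hybridize (2 ^ β)
  rw [mul_mul_mul_comm, ← pow_add, ← four_pow_eq_two_pow_mul_two_pow] at h
  refine (EqOn.bijOn_iff fun p _ => ?_).2 h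
  simp only [hybridize, morton, Function.uncurry_apply_pair, four_pow_eq_two_pow_mul_two_pow,
    add_assoc]
end

section
/- The bit-twiddling dilation algorithm is correct for 16-bit inputs: for t < 2^16, applying successively r ↦ (r ||| (r <<< 8)) &&& 0x00FF00FF, r ↦ (r ||| (r <<< 4)) &&& 0x0F0F0F0F, r ↦ (r ||| (r <<< 2)) &&& 0x33333333, r ↦ (r ||| (r <<< 1)) &&& 0x55555555 to r = t yields dilate(t). -/
/-!
Every stage `r ↦ (r ||| r <<< s) &&& m` of the algorithm distributes over `|||`, and so does
`dilate`. Since `t < 2 ^ 16` is the `|||` of the powers `2 ^ i`, `i < 16`, for which `t.testBit i`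
holds, it suffices to check the sixteen inputs `2 ^ i`, on which both sides equal `4 ^ i`.
-/

open Finset

theorem Nat.eq_of_map_or_of_eq_two_pow {f g : ℕ → ℕ} (hf : ∀ a b, f (a ||| b) = f a ||| f b)
    (hg : ∀ a b, g (a ||| b) = g a ||| g b) (h0 : f 0 = g 0) {n : ℕ}
    (hpow : ∀ i < n, f (2 ^ i) = g (2 ^ i)) {t : ℕ} (ht : t < 2 ^ n) : f t = g t := by
  induction n generalizing t with
  | zero => rwa [Nat.lt_one_iff.mp ht]
  | succ n ih =>
    have ih' : ∀ {t}, t < 2 ^ n → f t = g t := ih fun i hi => hpow i (by omega)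
    rcases lt_or_ge t (2 ^ n) with htn | htn
    · exact ih' htn
    · have hrest : t - 2 ^ n < 2 ^ n := by rw [pow_succ] at ht; omega
      have hsplit : t = 2 ^ n ||| (t - 2 ^ n) := by
        simpa [← Nat.add_sub_assoc htn] using Nat.two_pow_add_eq_or_of_lt hrest 1
      rw [hsplit, hf, hg, hpow n n.lt_succ_self, ih' hrest]

theorem testBit_sum_range_four_pow (c : ℕ → Bool) (N j : ℕ) :
    (∑ i ∈ range N, (c i).toNat * 4 ^ i).testBit j
      = (decide (j % 2 = 0 ∧ j / 2 < N) && c (j / 2)) := by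
  induction N generalizing j with
  | zero => simp
  | succ N ih =>
    have hlt : ∑ i ∈ range N, (c i).toNat * 4 ^ i < 2 ^ (2 * N) :=
      Nat.lt_pow_two_of_testBit _ fun i hi => by
        simp only [ih, show ¬(i % 2 = 0 ∧ i / 2 < N) by omega, decide_false, Bool.false_and]
    rw [sum_range_succ, add_comm, mul_comm, show (4 : ℕ) ^ N = 2 ^ (2 * N) by rw [pow_mul]; rfl,
      Nat.testBit_two_pow_mul_add _ hlt, ih, Nat.testBit_bool_toNat]
    rcases lt_trichotomy j (2 * N) with hj | rfl | hj
    · simp [hj, show j / 2 < N by omega, show j / 2 < N + 1 by omega]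
    · simp
    · simp only [show ¬j < 2 * N by omega, show j - 2 * N ≠ 0 by omega,
        show ¬(j % 2 = 0 ∧ j / 2 < N + 1) by omega, if_false, decide_false, Bool.false_and]

theorem testBit_dilate (k j : ℕ) :
    (dilate k).testBit j = (decide (j % 2 = 0) && k.testBit (j / 2)) := by
  rw [dilate, testBit_sum_range_four_pow]
  by_cases hj : j / 2 < k + 1
  · simp [hj]
  · have hk : k < 2 ^ (j / 2) :=
      Nat.lt_two_pow_self.trans_le (Nat.pow_le_pow_right two_pos (by omega))
    simp [hj, Nat.testBit_lt_two_pow hk]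

theorem dilate_or (a b : ℕ) : dilate (a ||| b) = dilate a ||| dilate b :=
  Nat.eq_of_testBit_eq fun j => by
    simp only [testBit_dilate, Nat.testBit_or]
    cases decide (j % 2 = 0) <;> rfl

theorem dilate_two_pow (i : ℕ) : dilate (2 ^ i) = 4 ^ i :=
  Nat.eq_of_testBit_eq fun j => by
    rw [testBit_dilate, Nat.testBit_two_pow, show (4 : ℕ) ^ i = 2 ^ (2 * i) by rw [pow_mul]; rfl,
      Nat.testBit_two_pow]
    by_cases h : j % 2 = 0
    · simp only [h, decide_true, Bool.true_and, decide_eq_decide]; omega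
    · simp only [h, decide_false, Bool.false_and, false_eq_decide_iff]; omega

def dilateStep (s m r : ℕ) : ℕ := (r ||| r <<< s) &&& m

theorem dilateStep_or (s m a b : ℕ) :
    dilateStep s m (a ||| b) = dilateStep s m a ||| dilateStep s m b := by
  simp only [dilateStep, Nat.shiftLeft_or_distrib, ← Nat.and_or_distrib_right]
  ac_rfl

def dilate16 (t : ℕ) : ℕ :=
  dilateStep 1 0x55555555 <| dilateStep 2 0x33333333 <| dilateStep 4 0x0F0F0F0F <|
    dilateStep 8 0x00FF00FF t

theorem dilate16_or (a b : ℕ) : dilate16 (a ||| b) = dilate16 a ||| dilate16 b := by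
  simp only [dilate16, dilateStep_or]

theorem dilate16_two_pow : ∀ i < 16, dilate16 (2 ^ i) = 4 ^ i := by decide

theorem dilate_algorithm_correct (t : ℕ) (ht : t < 2 ^ 16) :
    let r1 := (t ||| (t <<< 8)) &&& 0x00FF00FF
    let r2 := (r1 ||| (r1 <<< 4)) &&& 0x0F0F0F0F
    let r3 := (r2 ||| (r2 <<< 2)) &&& 0x33333333
    let r4 := (r3 ||| (r3 <<< 1)) &&& 0x55555555
    r4 = dilate t :=
  Nat.eq_of_map_or_of_eq_two_pow dilate16_or dilate_or rfl
    (fun i hi => (dilate16_two_pow i hi).trans (dilate_two_pow i).symm) ht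
end
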